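/- Let c be a normalized job-scheduling instance with m machines and n jobs, i.e., there is a constant C with c_i([n]) = C for every machine i. Then there exist an allocation A and payments p : Fin m → ℝ such that the mechanism (A, p) is proportional and A attains the optimal makespan, i.e., max_{i ∈ Fin m} c_i(A_i) = OPT(c). -/

import Mathlib

open Finset

noncomputable section

/-- The cost to machine `i` of the bundle of jobs assigned to machine `k` under allocation `A`. -/
def bundleCost {m n : ℕ} (c : Fin m → Fin n → ℝ) (A : Fin n → Fin m) (i k : Fin m) : ℝ :=
  ∑ j ∈ Finset.univ.filter (fun j => A j = k), c i j

/-- The total cost to machine `i` of all jobs, `c_i([n])`. -/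
def rowSum {m n : ℕ} (c : Fin m → Fin n → ℝ) (i : Fin m) : ℝ :=
  ∑ j, c i j

/-- The makespan of allocation `A`: the maximum cost of any machine. -/
def makespan {m n : ℕ} (hm : 0 < m) (c : Fin m → Fin n → ℝ) (A : Fin n → Fin m) : ℝ :=
  (Finset.univ : Finset (Fin m)).sup' ⟨⟨0, hm⟩, Finset.mem_univ _⟩ fun i => bundleCost c A i i

/-- The optimal (minimum) makespan over all allocations. -/
def OPT {m n : ℕ} (hm : 0 < m) (c : Fin m → Fin n → ℝ) : ℝ :=
  (Finset.univ : Finset (Fin n → Fin m)).inf' ⟨fun _ => ⟨0, hm⟩, Finset.mem_univ _⟩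
    fun X => makespan hm c X

namespace Stmt8Aux

variable {m : ℕ}

def Feas (E : Fin m → Fin m → ℝ) (p : (Fin m → ℝ) × (Fin m → ℝ)) : Prop :=
  ∀ i k, p.1 i + p.2 k ≤ E i k

def dval (p : (Fin m → ℝ) × (Fin m → ℝ)) : ℝ := ∑ i, p.1 i + ∑ i, p.2 i


lemma dual_bound (hm : 0 < m) (D : Fin m → Fin m → ℝ) (C M : ℝ)
    (hrow : ∀ i, ∑ k, D i k = C) (hdiag : ∀ i, D i i ≤ M)
    (u v : Fin m → ℝ)
    (hfeas : Feas (fun i k => if D i k ≤ M then D i k else C + 1) (u, v)) :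
    ∑ i, u i + ∑ i, v i ≤ C := by
  have hne : (univ : Finset (Fin m)).Nonempty := ⟨⟨0, hm⟩, mem_univ _⟩
  obtain ⟨i₀, -, hi₀⟩ := Finset.exists_max_image univ u hne
  have h1 : ∀ k, u k + v k ≤ D i₀ k := by
    intro k
    by_cases h : D i₀ k ≤ M
    · have h2 := hfeas i₀ k
      simp only [if_pos h] at h2
      have := hi₀ k (mem_univ k)
      linarith
    · have h2 := hfeas k k
      simp only [if_pos (hdiag k)] at h2
      push_neg at h
      linarith [hdiag k]
  calc ∑ i, u i + ∑ i, v i = ∑ k, (u k + v k) := (Finset.sum_add_distrib).symm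
    _ ≤ ∑ k, D i₀ k := Finset.sum_le_sum fun k _ => h1 k
    _ = C := hrow i₀



lemma normalize (hm : 0 < m) (E : Fin m → Fin m → ℝ) (B : ℝ)
    (hE0 : ∀ i k, 0 ≤ E i k) (hEB : ∀ i k, E i k ≤ B)
    (p : (Fin m → ℝ) × (Fin m → ℝ)) (hfeas : Feas E p) (hval : 0 ≤ dval p) :
    ∃ q, Feas E q ∧ 0 ≤ dval q ∧
      (∀ i, q.1 i ∈ Set.Icc (-(2 * m * B)) B ∧ q.2 i ∈ Set.Icc (-(2 * m * B)) B) ∧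
      dval p ≤ dval q := by
  obtain ⟨u, v⟩ := p
  have hne : (univ : Finset (Fin m)).Nonempty := ⟨⟨0, hm⟩, mem_univ _⟩
  have hB : 0 ≤ B := le_trans (hE0 ⟨0, hm⟩ ⟨0, hm⟩) (hEB _ _)
  set u' : Fin m → ℝ := fun i => univ.inf' hne (fun k => E i k - v k) with hu'
  have huu' : ∀ i, u i ≤ u' i := fun i =>
    Finset.le_inf' hne _ (fun k _ => by linarith [hfeas i k])
  have hu'f : ∀ i k, u' i + v k ≤ E i k := fun i k => by
    have := Finset.inf'_le (f := fun k => E i k - v k) (mem_univ k)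
    change univ.inf' hne (fun k => E i k - v k) ≤ E i k - v k at this
    change univ.inf' hne (fun k => E i k - v k) + v k ≤ E i k
    linarith
  set v' : Fin m → ℝ := fun k => univ.inf' hne (fun i => E i k - u' i) with hv'
  have hvv' : ∀ k, v k ≤ v' k := fun k =>
    Finset.le_inf' hne _ (fun i _ => by linarith [hu'f i k])
  have hfeas' : ∀ i k, u' i + v' k ≤ E i k := fun i k => by
    have := Finset.inf'_le (f := fun i => E i k - u' i) (mem_univ i)
    change univ.inf' hne (fun i => E i k - u' i) ≤ E i k - u' i at this
    change u' i + univ.inf' hne (fun i => E i k - u' i) ≤ E i k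
    linarith
  obtain ⟨k₀, -, hk₀⟩ := Finset.exists_mem_eq_inf' hne v'
  set c : ℝ := univ.inf' hne v' with hc
  have hcle : ∀ k, c ≤ v' k := fun k => Finset.inf'_le _ (mem_univ k)
  set u₂ : Fin m → ℝ := fun i => u' i + c with hu₂
  set v₂ : Fin m → ℝ := fun k => v' k - c with hv₂
  have hfeas₂ : Feas E (u₂, v₂) := fun i k => by
    simp only [hu₂, hv₂]
    have := hfeas' i k
    linarith
  have hval₂ : dval (u₂, v₂) = ∑ i, u' i + ∑ k, v' k := by
    simp only [dval, hu₂, hv₂, Finset.sum_add_distrib, Finset.sum_sub_distrib]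
    ring
  have hvalmono : dval (u, v) ≤ dval (u₂, v₂) := by
    rw [hval₂]
    have h1 : ∑ i, u i ≤ ∑ i, u' i := Finset.sum_le_sum fun i _ => huu' i
    have h2 : ∑ i, v i ≤ ∑ i, v' i := Finset.sum_le_sum fun i _ => hvv' i
    simp only [dval]
    linarith
  have hval₂0 : 0 ≤ dval (u₂, v₂) := le_trans hval hvalmono
  -- bounds
  have hv₂0 : ∀ k, 0 ≤ v₂ k := fun k => by simp only [hv₂]; have := hcle k; linarith
  have hu₂B : ∀ i, u₂ i ≤ B := fun i => by
    have h1 := hfeas' i k₀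
    have h2 := hEB i k₀
    simp only [hu₂]
    rw [hk₀]
    linarith
  have hv₂B : ∀ k, v₂ k ≤ B := fun k => by
    obtain ⟨i', -, hi'⟩ := Finset.exists_mem_eq_inf' hne (fun i => E i k₀ - u' i)
    have h1 : v' k₀ = E i' k₀ - u' i' := by rw [hv']; exact hi'
    have h2 : v' k ≤ E i' k - u' i' := Finset.inf'_le _ (mem_univ i')
    have h3 := hE0 i' k₀
    have h4 := hEB i' k
    simp only [hv₂]
    rw [hk₀]
    linarith
  have hsumv₂ : ∑ k, v₂ k ≤ m * B := by
    calc ∑ k, v₂ k ≤ ∑ _k : Fin m, B := Finset.sum_le_sum fun k _ => hv₂B k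
      _ = m * B := by simp [mul_comm]
  have hu₂L : ∀ i, -(2 * m * B) ≤ u₂ i := by
    intro i
    have h1 : ∑ j ∈ univ.erase i, u₂ j ≤ ∑ _j ∈ univ.erase i, B :=
      Finset.sum_le_sum fun j _ => hu₂B j
    have h2 : ∑ _j ∈ univ.erase i, B = ((univ.erase i).card : ℝ) * B := by
      rw [Finset.sum_const, nsmul_eq_mul]
    have h3 : ((univ.erase i).card : ℝ) ≤ m := by
      have := Finset.card_erase_le (a := i) (s := (univ : Finset (Fin m)))
      have hcard : (univ : Finset (Fin m)).card = m := Finset.card_fin m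
      exact_mod_cast le_trans this (le_of_eq hcard)
    have h4 : ∑ j ∈ univ.erase i, u₂ j ≤ m * B := by
      calc ∑ j ∈ univ.erase i, u₂ j ≤ ((univ.erase i).card : ℝ) * B := h1.trans (le_of_eq h2)
        _ ≤ m * B := mul_le_mul_of_nonneg_right h3 hB
    have h5 : u₂ i + ∑ j ∈ univ.erase i, u₂ j = ∑ j, u₂ j := by
      rw [← Finset.add_sum_erase _ _ (mem_univ i)]
    have h6 : 0 ≤ ∑ j, u₂ j + ∑ k, v₂ k := hval₂0
    nlinarith [hsumv₂]
  have hv₂L : ∀ k, -(2 * m * B) ≤ v₂ k := fun k => by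
    have := hv₂0 k
    have hmB : 0 ≤ 2 * m * B := by positivity
    linarith
  exact ⟨(u₂, v₂), hfeas₂, hval₂0, fun i =>
    ⟨⟨hu₂L i, hu₂B i⟩, ⟨hv₂L i, hv₂B i⟩⟩, hvalmono⟩


lemma hall_assignment (hm : 0 < m) (D : Fin m → Fin m → ℝ) (hD : ∀ i k, 0 ≤ D i k)
    (C M : ℝ) (hrow : ∀ i, ∑ k, D i k = C) (hdiag : ∀ i, D i i ≤ M) :
    ∃ f : Fin m → Fin m, Function.Bijective f ∧ (∀ i, D i (f i) ≤ M) ∧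
      ∑ i, D i (f i) ≤ C := by
  classical
  have hne : (univ : Finset (Fin m)).Nonempty := ⟨⟨0, hm⟩, mem_univ _⟩
  have hC0 : 0 ≤ C := by
    rw [← hrow ⟨0, hm⟩]; exact Finset.sum_nonneg fun k _ => hD _ k
  set E : Fin m → Fin m → ℝ := fun i k => if D i k ≤ M then D i k else C + 1 with hEdef
  set B : ℝ := C + 1 with hBdef
  have hE0 : ∀ i k, 0 ≤ E i k := by
    intro i k; simp only [hEdef]
    split
    · exact hD i k
    · linarith
  have hEB : ∀ i k, E i k ≤ B := by
    intro i k; simp only [hEdef, hBdef]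
    split
    · have h1 : D i k ≤ C := by
        rw [← hrow i]
        exact Finset.single_le_sum (fun k _ => hD i k) (mem_univ k)
      linarith
    · exact le_refl _
  set L : ℝ := 2 * m * B with hLdef
  set K : Set ((Fin m → ℝ) × (Fin m → ℝ)) :=
    {p | Feas E p ∧ 0 ≤ dval p ∧
      ∀ i, p.1 i ∈ Set.Icc (-L) B ∧ p.2 i ∈ Set.Icc (-L) B} with hKdef
  have hKne : K.Nonempty := by
    have hfeas0 : Feas E (fun _ => 0, fun k => univ.inf' hne (fun i => E i k)) := by
      intro i k
      simp only
      have := Finset.inf'_le (f := fun i => E i k) (mem_univ i)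
      linarith
    have hval0 : 0 ≤ dval (fun _ => 0, fun k => univ.inf' hne (fun i => E i k)) := by
      simp only [dval]
      have h0 : ∀ k, (0:ℝ) ≤ univ.inf' hne (fun i => E i k) := fun k =>
        Finset.le_inf' hne _ (fun i _ => hE0 i k)
      have h1 : (0:ℝ) ≤ ∑ k, univ.inf' hne (fun i => E i k) :=
        Finset.sum_nonneg fun k _ => h0 k
      simp only [Finset.sum_const_zero]
      linarith
    obtain ⟨q, hq1, hq2, hq3, -⟩ := normalize (m := m) hm E B hE0 hEB _ hfeas0 hval0
    exact ⟨q, hq1, hq2, hq3⟩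
  have hKcpt : IsCompact K := by
    have hbox : IsCompact ((Set.univ.pi fun _ : Fin m => Set.Icc (-L) B) ×ˢ
        (Set.univ.pi fun _ : Fin m => Set.Icc (-L) B)) :=
      (isCompact_univ_pi fun _ => isCompact_Icc).prod
        (isCompact_univ_pi fun _ => isCompact_Icc)
    refine IsCompact.of_isClosed_subset hbox ?_ ?_
    · have h1 : IsClosed {p : (Fin m → ℝ) × (Fin m → ℝ) | Feas E p} := by
        have heq : {p : (Fin m → ℝ) × (Fin m → ℝ) | Feas E p} =
            ⋂ i, ⋂ k, {p : (Fin m → ℝ) × (Fin m → ℝ) | p.1 i + p.2 k ≤ E i k} := by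
          ext p; simp [Feas, Set.mem_iInter]
        rw [heq]
        refine isClosed_iInter fun i => isClosed_iInter fun k => ?_
        exact isClosed_le (((continuous_apply i).comp continuous_fst).add
          ((continuous_apply k).comp continuous_snd)) continuous_const
      have h2 : IsClosed {p : (Fin m → ℝ) × (Fin m → ℝ) | 0 ≤ dval p} := by
        refine isClosed_le continuous_const ?_
        exact (continuous_finset_sum _ fun i _ =>
          (continuous_apply i).comp continuous_fst).add
          (continuous_finset_sum _ fun i _ => (continuous_apply i).comp continuous_snd)
      have h3 : IsClosed {p : (Fin m → ℝ) × (Fin m → ℝ) |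
          ∀ i, p.1 i ∈ Set.Icc (-L) B ∧ p.2 i ∈ Set.Icc (-L) B} := by
        have heq : {p : (Fin m → ℝ) × (Fin m → ℝ) |
            ∀ i, p.1 i ∈ Set.Icc (-L) B ∧ p.2 i ∈ Set.Icc (-L) B} =
            ⋂ i, ({p : (Fin m → ℝ) × (Fin m → ℝ) | p.1 i ∈ Set.Icc (-L) B} ∩
              {p | p.2 i ∈ Set.Icc (-L) B}) := by
          ext p; simp [Set.mem_iInter]
        rw [heq]
        refine isClosed_iInter fun i => IsClosed.inter ?_ ?_
        · exact isClosed_Icc.preimage ((continuous_apply i).comp continuous_fst)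
        · exact isClosed_Icc.preimage ((continuous_apply i).comp continuous_snd)
      have heq : K = {p | Feas E p} ∩ ({p | 0 ≤ dval p} ∩
          {p : (Fin m → ℝ) × (Fin m → ℝ) |
            ∀ i, p.1 i ∈ Set.Icc (-L) B ∧ p.2 i ∈ Set.Icc (-L) B}) := by
        rfl
      rw [heq]
      exact h1.inter (h2.inter h3)
    · rintro ⟨u, v⟩ ⟨-, -, hb⟩
      constructor
      · exact Set.mem_univ_pi.mpr fun i => (hb i).1
      · exact Set.mem_univ_pi.mpr fun i => (hb i).2
  have hdvalcont : Continuous (dval (m := m)) :=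
    (continuous_finset_sum _ fun i _ => (continuous_apply i).comp continuous_fst).add
      (continuous_finset_sum _ fun i _ => (continuous_apply i).comp continuous_snd)
  obtain ⟨p, hpK, hpmax⟩ := hKcpt.exists_isMaxOn hKne hdvalcont.continuousOn
  obtain ⟨u, v⟩ := p
  obtain ⟨hpfeas, hpval, -⟩ := hpK
  set t : Fin m → Finset (Fin m) :=
    fun i => univ.filter (fun k => u i + v k = E i k) with htdef
  have hhall : ∀ S : Finset (Fin m), S.card ≤ (S.biUnion t).card := by
    by_contra hcon
    push_neg at hcon
    obtain ⟨S, hS⟩ := hcon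
    set NS := S.biUnion t with hNSdef
    have hSne : S.Nonempty := Finset.card_pos.mp (lt_of_le_of_lt (Nat.zero_le _) hS)
    have hNSc : (univ \ NS).Nonempty := by
      rw [Finset.sdiff_nonempty]
      intro hsub
      have h1 : (univ : Finset (Fin m)).card ≤ NS.card := Finset.card_le_card hsub
      have h2 : S.card ≤ (univ : Finset (Fin m)).card := Finset.card_le_univ S
      omega
    set P := S ×ˢ (univ \ NS) with hPdef
    have hPne : P.Nonempty := hSne.product hNSc
    set ε : ℝ := P.inf' hPne (fun q => E q.1 q.2 - u q.1 - v q.2) with hεdef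
    have hεpos : 0 < ε := by
      rw [hεdef, Finset.lt_inf'_iff]
      rintro ⟨i, k⟩ hq
      rw [hPdef, Finset.mem_product] at hq
      obtain ⟨hiS, hk⟩ := hq
      rw [Finset.mem_sdiff] at hk
      have hknt : k ∉ t i := fun hmem => hk.2 (Finset.mem_biUnion.mpr ⟨i, hiS, hmem⟩)
      have hne' : u i + v k ≠ E i k := by
        intro h
        exact hknt (by rw [htdef]; exact Finset.mem_filter.mpr ⟨mem_univ k, h⟩)
      have hle := hpfeas i k
      simp only at hle
      have hlt : u i + v k < E i k := lt_of_le_of_ne hle hne'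
      simp only
      linarith
    have hεle : ∀ i k, i ∈ S → k ∉ NS → ε ≤ E i k - u i - v k := by
      intro i k hi hk
      have hmem : (i, k) ∈ P := by
        rw [hPdef, Finset.mem_product]
        exact ⟨hi, Finset.mem_sdiff.mpr ⟨mem_univ k, hk⟩⟩
      have := Finset.inf'_le (f := fun q : Fin m × Fin m => E q.1 q.2 - u q.1 - v q.2) hmem
      rw [hεdef]
      exact this
    set u₁ : Fin m → ℝ := fun i => u i + (if i ∈ S then ε else 0) with hu₁def
    set v₁ : Fin m → ℝ := fun k => v k - (if k ∈ NS then ε else 0) with hv₁def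
    have hfeas₁ : Feas E (u₁, v₁) := by
      intro i k
      simp only [hu₁def, hv₁def]
      have hb := hpfeas i k
      simp only at hb ⊢
      by_cases hiS : i ∈ S
      · by_cases hkN : k ∈ NS
        · simp only [if_pos hiS, if_pos hkN]; linarith
        · simp only [if_pos hiS, if_neg hkN]
          have := hεle i k hiS hkN
          linarith
      · by_cases hkN : k ∈ NS
        · simp only [if_neg hiS, if_pos hkN]; linarith [hεpos.le]
        · simp only [if_neg hiS, if_neg hkN]; linarith
    have hval₁ : dval (u₁, v₁) = dval (u, v) + (S.card : ℝ) * ε - (NS.card : ℝ) * ε := by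
      simp only [dval, hu₁def, hv₁def, Finset.sum_add_distrib, Finset.sum_sub_distrib]
      have h1 : ∑ i, (if i ∈ S then ε else 0) = (S.card : ℝ) * ε := by
        rw [Finset.sum_ite_mem, Finset.univ_inter, Finset.sum_const, nsmul_eq_mul]
      have h2 : ∑ k, (if k ∈ NS then ε else 0) = (NS.card : ℝ) * ε := by
        rw [Finset.sum_ite_mem, Finset.univ_inter, Finset.sum_const, nsmul_eq_mul]
      rw [h1, h2]
      ring
    have hgt : dval (u, v) < dval (u₁, v₁) := by
      rw [hval₁]
      have hcards : (NS.card : ℝ) + 1 ≤ (S.card : ℝ) := by exact_mod_cast hS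
      nlinarith
    have hval₁0 : 0 ≤ dval (u₁, v₁) := le_trans hpval hgt.le
    obtain ⟨q, hqfeas, hqval, hqbox, hqge⟩ :=
      normalize (m := m) hm E B hE0 hEB _ hfeas₁ hval₁0
    have hqK : q ∈ K := ⟨hqfeas, hqval, hqbox⟩
    have := hpmax hqK
    simp only [Set.mem_setOf_eq] at this
    have : dval q ≤ dval (u, v) := this
    linarith [lt_of_lt_of_le hgt hqge]
  obtain ⟨f, hfinj, hft⟩ :=
    (Finset.all_card_le_biUnion_card_iff_exists_injective t).mp hhall
  have hfbij : Function.Bijective f := Finite.injective_iff_bijective.mp hfinj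
  have htight : ∀ i, u i + v (f i) = E i (f i) := by
    intro i
    have := hft i
    rw [htdef] at this
    exact (Finset.mem_filter.mp this).2
  have hsumE : ∑ i, E i (f i) ≤ C := by
    have h1 : ∑ i, E i (f i) = ∑ i, u i + ∑ i, v (f i) := by
      rw [← Finset.sum_add_distrib]
      exact Finset.sum_congr rfl fun i _ => (htight i).symm
    have h2 : ∑ i, v (f i) = ∑ i, v i := Fintype.sum_bijective f hfbij _ _ fun i => rfl
    rw [h1, h2]
    exact dual_bound hm D C M hrow hdiag u v hpfeas
  have hgood : ∀ i, D i (f i) ≤ M := by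
    intro i
    by_contra hbad
    have hEi : E i (f i) = C + 1 := by simp only [hEdef]; rw [if_neg hbad]
    have h1 : E i (f i) ≤ ∑ j, E j (f j) :=
      Finset.single_le_sum (fun j _ => hE0 j (f j)) (mem_univ i)
    rw [hEi] at h1
    linarith
  refine ⟨f, hfbij, hgood, ?_⟩
  have : ∑ i, D i (f i) = ∑ i, E i (f i) :=
    Finset.sum_congr rfl fun i _ => by simp only [hEdef]; rw [if_pos (hgood i)]
  rw [this]
  exact hsumE


end Stmt8Aux

open Stmt8Aux in
/-- For normalized instances there is a proportional mechanism attaining the optimal makespan. -/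
theorem stmt_8 {m n : ℕ} (hm : 2 ≤ m) (hn : 2 ≤ n)
    (c : Fin m → Fin n → ℝ) (hc : ∀ i j, 0 ≤ c i j)
    (C : ℝ) (hnorm : ∀ i : Fin m, rowSum c i = C) :
    ∃ (A : Fin n → Fin m) (p : Fin m → ℝ),
      (∀ i : Fin m,
        bundleCost c A i i - p i ≤ (1 / (m : ℝ)) * ∑ k : Fin m, (bundleCost c A i k - p k)) ∧
      makespan (by omega) c A = OPT (by omega) c := by
  classical
  have hm0 : 0 < m := by omega
  -- optimal allocation
  obtain ⟨A₀, -, hA₀⟩ := Finset.exists_mem_eq_inf'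
    (⟨fun _ => ⟨0, hm0⟩, Finset.mem_univ _⟩ :
      (Finset.univ : Finset (Fin n → Fin m)).Nonempty)
    (fun X => makespan hm0 c X)
  -- D matrix
  set D : Fin m → Fin m → ℝ := fun i k => bundleCost c A₀ i k with hDdef
  have hD0 : ∀ i k, 0 ≤ D i k := fun i k =>
    Finset.sum_nonneg fun j _ => hc i j
  have hrowD : ∀ i, ∑ k, D i k = C := by
    intro i
    rw [← hnorm i]
    simp only [hDdef, bundleCost, rowSum]
    exact Finset.sum_fiberwise_of_maps_to (fun j _ => mem_univ (A₀ j)) (fun j => c i j)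
  have hdiagD : ∀ i, D i i ≤ OPT hm0 c := by
    intro i
    have h1 : D i i ≤ makespan hm0 c A₀ :=
      Finset.le_sup' (f := fun i => bundleCost c A₀ i i) (mem_univ i)
    have hOPT : OPT hm0 c = makespan hm0 c A₀ := hA₀
    rw [hOPT]
    exact h1
  obtain ⟨f, hfbij, hgood, hsum⟩ := hall_assignment hm0 D hD0 C (OPT hm0 c) hrowD hdiagD
  set e : Fin m ≃ Fin m := Equiv.ofBijective f hfbij with hedef
  set A : Fin n → Fin m := fun j => e.symm (A₀ j) with hAdef
  have hbc : ∀ i k, bundleCost c A i k = D i (f k) := by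
    intro i k
    simp only [hDdef, bundleCost, hAdef]
    apply Finset.sum_congr _ (fun j _ => rfl)
    apply Finset.filter_congr
    intro j _
    show e.symm (A₀ j) = k ↔ A₀ j = f k
    rw [Equiv.symm_apply_eq]
    exact Iff.rfl
  have hms : makespan hm0 c A = OPT hm0 c := by
    apply le_antisymm
    · apply Finset.sup'_le
      intro i _
      rw [hbc i i]
      exact hgood i
    · exact Finset.inf'_le _ (mem_univ A)
  refine ⟨A, fun i => bundleCost c A i i, ?_, ?_⟩
  · intro i
    have hLHS : bundleCost c A i i - bundleCost c A i i = 0 := sub_self _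
    rw [hLHS]
    have hsum1 : ∑ k, bundleCost c A i k = C := by
      have h1 : ∀ k, bundleCost c A i k = D i (f k) := hbc i
      calc ∑ k, bundleCost c A i k = ∑ k, D i (f k) :=
            Finset.sum_congr rfl fun k _ => h1 k
        _ = ∑ k, D i k := Fintype.sum_bijective f hfbij _ _ fun k => rfl
        _ = C := hrowD i
    have hsum2 : ∑ k, bundleCost c A k k ≤ C := by
      calc ∑ k, bundleCost c A k k = ∑ k, D k (f k) :=
            Finset.sum_congr rfl fun k _ => hbc k k
        _ ≤ C := hsum
    have hexp : ∑ k : Fin m, (bundleCost c A i k - bundleCost c A k k) =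
        C - ∑ k, bundleCost c A k k := by
      rw [Finset.sum_sub_distrib, hsum1]
    rw [hexp]
    have hmpos : (0:ℝ) < (m : ℝ) := by exact_mod_cast hm0
    have h1 : (0:ℝ) ≤ 1 / (m:ℝ) := by positivity
    have h2 : (0:ℝ) ≤ C - ∑ k, bundleCost c A k k := by linarith
    exact mul_nonneg h1 h2
  · exact hms
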